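/- Let (V,E,μ) be an infinite, connected, locally finite weighted graph, 1 < p < ∞, and y ∈ V. Let Ω ⊆ Ω′ be finite subsets of V containing y, and let g_Ω(·,y) and g_{Ω′}(·,y) be local p-Green functions of Ω and Ω′ with pole at y. Then g_Ω(x,y) ≤ g_{Ω′}(x,y) for all x ∈ V. In particular, for balls B_R centered at a fixed vertex o, the local Green functions g_R(x,y) = g_{B_R}(x,y) are nondecreasing in R. -/

import Mathlib

open scoped BigOperators ENNReal

/-- `Φ_p(t) = |t|^{p-2} t`. -/
noncomputable def Phi (p t : ℝ) : ℝ := |t| ^ (p - 2) * t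

/-- Vertex measure `μ(x) = ∑_{y ~ x} μ_{xy}`. -/
noncomputable def vMeas {V : Type*} (G : SimpleGraph V) (w : V → V → ℝ) (x : V) : ℝ :=
  ∑ᶠ y ∈ {y | G.Adj x y}, w x y

/-- The `p`-Laplacian `Δ_p u(x) = μ(x)⁻¹ ∑_{y ~ x} μ_{xy} Φ_p(u(y) - u(x))`. -/
noncomputable def pLap {V : Type*} (G : SimpleGraph V) (w : V → V → ℝ) (p : ℝ)
    (u : V → ℝ) (x : V) : ℝ :=
  (vMeas G w x)⁻¹ * ∑ᶠ y ∈ {y | G.Adj x y}, w x y * Phi p (u y - u x)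

/-- The ball `B_R = {x : d(o,x) ≤ R}` with respect to the graph distance. -/
def ballSet {V : Type*} (G : SimpleGraph V) (o : V) (R : ℕ) : Set V :=
  {x | G.dist o x ≤ R}

/-- `g` is a local `p`-Green function of `Ω` with pole at `y`. -/
def IsGreen {V : Type*} (G : SimpleGraph V) (w : V → V → ℝ) (p : ℝ)
    (Ω : Set V) (y : V) (g : V → ℝ) : Prop :=
  (∀ x ∉ Ω, g x = 0) ∧ (∀ x ∈ Ω, x ≠ y → -pLap G w p g x = 0) ∧
    -pLap G w p g y = (vMeas G w y)⁻¹

/-!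
Both Green functions have the same `p`-Laplacian on `Ω`, and off `Ω` we have
`g_Ω = 0 ≤ g_{Ω'}`, so the claim is an instance of the weak comparison principle
(which, compared with `0`, also gives `g_{Ω'} ≥ 0`). The comparison principle is proved by a
strong maximum principle: where `u - v` attains a positive maximum, each term of `Δ_p u` is
at most the corresponding term of `Δ_p v` because `Φ_p` is increasing, so `Δ_p v ≤ Δ_p u`
forces `u - v` to be constant on the neighbours. By connectedness the maximum then spreads
outside `Ω`, where `u - v ≤ 0`.
-/

lemma Phi_zero (p : ℝ) : Phi p 0 = 0 := by simp [Phi]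

lemma Phi_neg (p t : ℝ) : Phi p (-t) = -Phi p t := by simp [Phi]

lemma Phi_eq_rpow {p t : ℝ} (ht : 0 < t) : Phi p t = t ^ (p - 1) := by
  rw [Phi, abs_of_pos ht, ← Real.rpow_add_one ht.ne']
  ring_nf

lemma Phi_strictMono {p : ℝ} (hp : 1 < p) : StrictMono (Phi p) := by
  refine strictMono_of_odd_strictMonoOn_nonneg (Phi_neg p) fun s hs t _ hst => ?_
  rcases (Set.mem_Ici.mp hs).eq_or_lt with rfl | hs
  · rw [Phi_zero, Phi_eq_rpow hst]
    positivity
  · rw [Phi_eq_rpow hs, Phi_eq_rpow (hs.trans hst)]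
    exact Real.rpow_lt_rpow hs.le hst (by linarith)

lemma SimpleGraph.Preconnected.mem_of_forall_adj_mem {V : Type*} {G : SimpleGraph V}
    (hG : G.Preconnected) {s : Set V} (hs : ∀ x ∈ s, ∀ y, G.Adj x y → y ∈ s)
    {a : V} (ha : a ∈ s) (b : V) : b ∈ s := by
  obtain ⟨q⟩ := hG a b
  induction q with
  | nil => exact ha
  | cons h _ ih => exact ih (hs _ ha _ h)

section pLaplacian

variable {V : Type*} {G : SimpleGraph V} {w : V → V → ℝ} {p : ℝ}

lemma vMeas_nonneg (hwpos : ∀ x y, G.Adj x y → 0 < w x y) (x : V) : 0 ≤ vMeas G w x :=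
  finsum_nonneg fun y => finsum_nonneg fun hy => (hwpos x y hy).le

lemma vMeas_pos_of_adj (hlf : ∀ x : V, {y | G.Adj x y}.Finite)
    (hwpos : ∀ x y, G.Adj x y → 0 < w x y) {x z : V} (hxz : G.Adj x z) :
    0 < vMeas G w x := by
  rw [vMeas, finsum_mem_eq_finite_toFinset_sum _ (hlf x)]
  exact Finset.sum_pos (fun y hy => hwpos x y ((hlf x).mem_toFinset.mp hy))
    ⟨z, (hlf x).mem_toFinset.mpr hxz⟩

lemma pLap_zero (x : V) : pLap G w p 0 x = 0 := by simp [pLap, Phi_zero]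

lemma sub_eq_of_adj_of_pLap_le (hlf : ∀ x : V, {y | G.Adj x y}.Finite)
    (hwpos : ∀ x y, G.Adj x y → 0 < w x y) (hp : 1 < p) {u v : V → ℝ} {x z : V}
    (hmax : ∀ y, G.Adj x y → u y - v y ≤ u x - v x)
    (hlap : pLap G w p v x ≤ pLap G w p u x) (hxz : G.Adj x z) :
    u z - v z = u x - v x := by
  have hterm : ∀ y ∈ (hlf x).toFinset,
      w x y * Phi p (u y - u x) ≤ w x y * Phi p (v y - v x) := fun y hy => by
    rw [Set.Finite.mem_toFinset] at hy
    exact mul_le_mul_of_nonneg_left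
      ((Phi_strictMono hp).monotone (by linarith [hmax y hy])) (hwpos x y hy).le
  have hsum : ∑ y ∈ (hlf x).toFinset, w x y * Phi p (u y - u x) =
      ∑ y ∈ (hlf x).toFinset, w x y * Phi p (v y - v x) := by
    refine le_antisymm (Finset.sum_le_sum hterm) ?_
    rwa [pLap, pLap, finsum_mem_eq_finite_toFinset_sum _ (hlf x),
      finsum_mem_eq_finite_toFinset_sum _ (hlf x),
      mul_le_mul_iff_right₀ (inv_pos.mpr (vMeas_pos_of_adj hlf hwpos hxz))] at hlap
  have hz := (Finset.sum_eq_sum_iff_of_le hterm).mp hsum z ((hlf x).mem_toFinset.mpr hxz)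
  have := (Phi_strictMono hp).injective (mul_left_cancel₀ (hwpos x z hxz).ne' hz)
  linarith

theorem le_of_pLap_le (hconn : G.Preconnected) (hlf : ∀ x : V, {y | G.Adj x y}.Finite)
    (hwpos : ∀ x y, G.Adj x y → 0 < w x y) (hp : 1 < p) {Ω : Set V} (hΩ : Ω.Finite)
    (hΩc : Ωᶜ.Nonempty) {u v : V → ℝ} (hout : ∀ x ∉ Ω, u x ≤ v x)
    (hlap : ∀ x ∈ Ω, pLap G w p v x ≤ pLap G w p u x) (x : V) : u x ≤ v x := by
  by_contra! hx
  have hxΩ : x ∈ Ω := by_contra fun h => (hout x h).not_gt hx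
  obtain ⟨a, haΩ, ha⟩ := Set.exists_max_image Ω (fun y => u y - v y) hΩ ⟨x, hxΩ⟩
  have hpos : 0 < u a - v a := by linarith [ha x hxΩ]
  have hmax : ∀ y, u y - v y ≤ u a - v a := fun y => by
    by_cases hy : y ∈ Ω
    · exact ha y hy
    · linarith [hout y hy]
  set s := {y | u y - v y = u a - v a}
  have hsΩ : s ⊆ Ω := fun y hy => by_contra fun h => by
    linarith [hout y h, show u y - v y = u a - v a from hy]
  have hclosed : ∀ y ∈ s, ∀ z, G.Adj y z → z ∈ s := fun y hy z hyz => by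
    have hy' : u y - v y = u a - v a := hy
    show u z - v z = u a - v a
    rw [← hy']
    exact sub_eq_of_adj_of_pLap_le hlf hwpos hp (fun z _ => hy' ▸ hmax z) (hlap y (hsΩ hy)) hyz
  obtain ⟨b, hb⟩ := hΩc
  exact hb (hsΩ (hconn.mem_of_forall_adj_mem hclosed (show a ∈ s from rfl) b))

end pLaplacian

section Green

variable {V : Type*} {G : SimpleGraph V} {w : V → V → ℝ} {p : ℝ} {Ω Ω' : Set V} {y : V}
  {g g' : V → ℝ}

lemma IsGreen.pLap_nonpos (hwpos : ∀ x y, G.Adj x y → 0 < w x y) (hg : IsGreen G w p Ω y g)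
    {x : V} (hx : x ∈ Ω) : pLap G w p g x ≤ 0 := by
  by_cases hxy : x = y
  · rw [hxy, ← neg_neg (pLap G w p g y), hg.2.2, neg_nonpos, inv_nonneg]
    exact vMeas_nonneg hwpos y
  · exact (neg_eq_zero.mp (hg.2.1 x hx hxy)).le

lemma IsGreen.pLap_eq_of_subset (hsub : Ω ⊆ Ω') (hg : IsGreen G w p Ω y g)
    (hg' : IsGreen G w p Ω' y g') {x : V} (hx : x ∈ Ω) : pLap G w p g x = pLap G w p g' x := by
  by_cases hxy : x = y
  · rw [hxy, ← neg_inj, hg.2.2, hg'.2.2]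
  · rw [neg_eq_zero.mp (hg.2.1 x hx hxy), neg_eq_zero.mp (hg'.2.1 x (hsub hx) hxy)]

lemma IsGreen.nonneg (hconn : G.Preconnected) (hlf : ∀ x : V, {y | G.Adj x y}.Finite)
    (hwpos : ∀ x y, G.Adj x y → 0 < w x y) (hp : 1 < p) (hΩ : Ω.Finite) (hΩc : Ωᶜ.Nonempty)
    (hg : IsGreen G w p Ω y g) (x : V) : 0 ≤ g x :=
  le_of_pLap_le hconn hlf hwpos hp hΩ hΩc (u := 0) (fun x hx => (hg.1 x hx).ge)
    (fun x hx => (hg.pLap_nonpos hwpos hx).trans_eq (pLap_zero x).symm) x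

lemma IsGreen.le_of_subset (hconn : G.Preconnected) (hlf : ∀ x : V, {y | G.Adj x y}.Finite)
    (hwpos : ∀ x y, G.Adj x y → 0 < w x y) (hp : 1 < p) (hΩ : Ω.Finite) (hΩ' : Ω'.Finite)
    (hΩ'c : Ω'ᶜ.Nonempty) (hsub : Ω ⊆ Ω') (hg : IsGreen G w p Ω y g)
    (hg' : IsGreen G w p Ω' y g') (x : V) : g x ≤ g' x :=
  le_of_pLap_le hconn hlf hwpos hp hΩ (hΩ'c.mono (Set.compl_subset_compl.mpr hsub))
    (fun z hz => (hg.1 z hz).trans_le (hg'.nonneg hconn hlf hwpos hp hΩ' hΩ'c z))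
    (fun _ hx => (hg.pLap_eq_of_subset hsub hg' hx).ge) x

end Green

lemma ballSet_succ_subset {V : Type*} {G : SimpleGraph V} (hconn : G.Preconnected)
    (o : V) (R : ℕ) :
    ballSet G o (R + 1) ⊆ ⋃ z ∈ ballSet G o R, insert z {y | G.Adj z y} := by
  intro x hx
  by_cases hxo : x = o
  · exact Set.mem_biUnion (show G.dist o o ≤ R by simp) (hxo ▸ Set.mem_insert x _)
  obtain ⟨q, hq⟩ := (hconn x o).exists_walk_length_eq_dist
  have hnil : ¬ q.Nil := SimpleGraph.Walk.not_nil_of_ne hxo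
  refine Set.mem_biUnion (x := q.snd) ?_ (Or.inr (q.adj_snd hnil).symm)
  have htail := q.length_tail_add_one hnil
  have hxR : G.dist o x ≤ R + 1 := hx
  calc G.dist o q.snd = G.dist q.snd o := SimpleGraph.dist_comm
    _ ≤ q.tail.length := SimpleGraph.dist_le q.tail
    _ ≤ R := by rw [SimpleGraph.dist_comm] at hq; omega

lemma ballSet_finite {V : Type*} {G : SimpleGraph V} (hconn : G.Preconnected)
    (hlf : ∀ x : V, {y | G.Adj x y}.Finite) (o : V) (R : ℕ) : (ballSet G o R).Finite := by
  induction R with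
  | zero =>
    refine (Set.finite_singleton o).subset fun x hx => ?_
    exact ((SimpleGraph.dist_eq_zero_iff_eq_or_not_reachable.mp (Nat.le_zero.mp hx)).resolve_right
      (not_not.mpr (hconn o x))).symm
  | succ R ih =>
    exact (ih.biUnion fun z _ => (hlf z).insert z).subset (ballSet_succ_subset hconn o R)

theorem stmt15_general {V : Type*} [Infinite V] (G : SimpleGraph V)
    (hconn : G.Connected) (hlf : ∀ x : V, {y | G.Adj x y}.Finite)
    (w : V → V → ℝ)
    (hwpos : ∀ x y, G.Adj x y → 0 < w x y)
    (p : ℝ) (hp : 1 < p) (y : V) :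
    (∀ (Ω Ω' : Set V), Ω.Finite → Ω'.Finite → Ω ⊆ Ω' → y ∈ Ω →
      ∀ g g' : V → ℝ, IsGreen G w p Ω y g → IsGreen G w p Ω' y g' →
        ∀ x, g x ≤ g' x) ∧
    (∀ (o : V) (R R' : ℕ), R ≤ R' → G.dist o y ≤ R →
      ∀ g g' : V → ℝ, IsGreen G w p (ballSet G o R) y g →
        IsGreen G w p (ballSet G o R') y g' →
        ∀ x, g x ≤ g' x) := by
  have hmono : ∀ Ω Ω' : Set V, Ω.Finite → Ω'.Finite → Ω ⊆ Ω' →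
      ∀ g g' : V → ℝ, IsGreen G w p Ω y g → IsGreen G w p Ω' y g' → ∀ x, g x ≤ g' x :=
    fun _ _ hΩ hΩ' hsub _ _ hg hg' =>
      hg.le_of_subset hconn.preconnected hlf hwpos hp hΩ hΩ' hΩ'.infinite_compl.nonempty hsub hg'
  refine ⟨fun Ω Ω' hΩ hΩ' hsub _ => hmono Ω Ω' hΩ hΩ' hsub, fun o R R' hRR' _ => ?_⟩
  exact hmono _ _ (ballSet_finite hconn.preconnected hlf o R)
    (ballSet_finite hconn.preconnected hlf o R') fun x hx => le_trans hx hRR'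

/-- Monotonicity of local `p`-Green functions in the domain: if `Ω ⊆ Ω'` are finite sets
containing the pole `y`, then `g_Ω(·,y) ≤ g_{Ω'}(·,y)` pointwise; in particular, for balls
`B_R` centered at a fixed vertex `o`, the local Green functions are nondecreasing in `R`. -/
theorem stmt15 {V : Type*} [Infinite V] (G : SimpleGraph V)
    (hconn : G.Connected) (hlf : ∀ x : V, {y | G.Adj x y}.Finite)
    (w : V → V → ℝ) (hwsymm : ∀ x y, w x y = w y x)
    (hwpos : ∀ x y, G.Adj x y → 0 < w x y)
    (p : ℝ) (hp : 1 < p) (y : V) :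
    (∀ (Ω Ω' : Set V), Ω.Finite → Ω'.Finite → Ω ⊆ Ω' → y ∈ Ω →
      ∀ g g' : V → ℝ, IsGreen G w p Ω y g → IsGreen G w p Ω' y g' →
        ∀ x, g x ≤ g' x) ∧
    (∀ (o : V) (R R' : ℕ), R ≤ R' → G.dist o y ≤ R →
      ∀ g g' : V → ℝ, IsGreen G w p (ballSet G o R) y g →
        IsGreen G w p (ballSet G o R') y g' →
        ∀ x, g x ≤ g' x) :=
  stmt15_general G hconn hlf w hwpos p hp y
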